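/- Let (d_ℓ)_{ℓ≥0} be a nondecreasing sequence of powers of 2, and let (S_j^t)_{j} be finite multiplicities (natural numbers) evolving over discrete time t by one of three moves at each step: (i) no change; (ii) for some index k with S_k^t ≥ d_k, replace S_k^{t+1} = S_k^t - d_k and S_{k+1}^{t+1} = S_{k+1}^t + d_k; or (iii) for some index k with S_{k-1}^t = 0, replace S_{k-1}^{t+1} = d_k and S_k^{t+1} = S_k^t - d_k. If initially d_i divides Σ_{j≤i} S_j^0 for every i, then at every time t and every index i, d_i divides Σ_{j≤i} S_j^t. -/
import Mathlib

theorem prefix_sum_divisibility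
    (d : ℕ → ℕ) (hpow : ∀ ℓ, ∃ m, d ℓ = 2 ^ m) (hmono : Monotone d)
    (S : ℕ → ℕ → ℕ)
    (hstep : ∀ t,
      (∀ j, S (t + 1) j = S t j) ∨
      (∃ k, d k ≤ S t k ∧
        S (t + 1) k = S t k - d k ∧
        S (t + 1) (k + 1) = S t (k + 1) + d k ∧
        ∀ j, j ≠ k → j ≠ k + 1 → S (t + 1) j = S t j) ∨
      (∃ k, 0 < k ∧ S t (k - 1) = 0 ∧ d k ≤ S t k ∧
        S (t + 1) (k - 1) = d k ∧
        S (t + 1) k = S t k - d k ∧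
        ∀ j, j ≠ k - 1 → j ≠ k → S (t + 1) j = S t j))
    (hinit : ∀ i, d i ∣ ∑ j ∈ Finset.range (i + 1), S 0 j) :
    ∀ t i, d i ∣ ∑ j ∈ Finset.range (i + 1), S t j := by
  have hdvd : ∀ i k, i ≤ k → d i ∣ d k := by
    intro i k hik
    obtain ⟨a, ha⟩ := hpow i
    obtain ⟨b, hb⟩ := hpow k
    have hle : d i ≤ d k := hmono hik
    rw [ha, hb] at hle ⊢
    exact pow_dvd_pow 2 ((Nat.pow_le_pow_iff_right one_lt_two).mp hle)
  intro t
  induction t with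
  | zero => exact hinit
  | succ t IH =>
    intro i
    rcases hstep t with h | ⟨k, hk, h1, h2, h3⟩ | ⟨k, hk0, hz, hk, h1, h2, h3⟩
    · have : ∑ j ∈ Finset.range (i + 1), S (t + 1) j
          = ∑ j ∈ Finset.range (i + 1), S t j :=
        Finset.sum_congr rfl fun j _ => h j
      rw [this]; exact IH i
    · -- case ii
      have key : ∑ j ∈ Finset.range (i + 1), (S (t + 1) j + if j = k then d k else 0)
          = ∑ j ∈ Finset.range (i + 1), (S t j + if j = k + 1 then d k else 0) := by
        refine Finset.sum_congr rfl fun j _ => ?_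
        by_cases hjk : j = k
        · subst hjk; simp at hk ⊢; omega
        · by_cases hjk1 : j = k + 1
          · subst hjk1; simp [h2]
          · simp [hjk, hjk1, h3 j hjk hjk1]
      rw [Finset.sum_add_distrib, Finset.sum_add_distrib,
        Finset.sum_ite_eq' (Finset.range (i+1)) k (fun _ => d k),
        Finset.sum_ite_eq' (Finset.range (i+1)) (k+1) (fun _ => d k)] at key
      simp only [Finset.mem_range] at key
      by_cases hik : k + 1 < i + 1
      · -- i ≥ k+1 : both ifs fire, sums equal
        have hk1 : k < i + 1 := by omega
        rw [if_pos hk1, if_pos hik] at key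
        have heq : ∑ j ∈ Finset.range (i + 1), S (t + 1) j
            = ∑ j ∈ Finset.range (i + 1), S t j := by omega
        rw [heq]; exact IH i
      · by_cases hik2 : k < i + 1
        · -- i = k
          have hik3 : i = k := by omega
          rw [if_pos hik2, if_neg hik] at key
          have : d i ∣ ∑ j ∈ Finset.range (i + 1), S t j := IH i
          subst hik3
          exact (Nat.dvd_add_right (dvd_refl (d i))).mp (by rw [Nat.add_comm, key]; exact this)
        · -- i < k : no change
          rw [if_neg hik2, if_neg hik] at key
          have heq : ∑ j ∈ Finset.range (i + 1), S (t + 1) j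
              = ∑ j ∈ Finset.range (i + 1), S t j := by omega
          rw [heq]; exact IH i
    · -- case iii
      have hkne : k ≠ k - 1 := by omega
      have key : ∑ j ∈ Finset.range (i + 1), (S (t + 1) j + if j = k then d k else 0)
          = ∑ j ∈ Finset.range (i + 1), (S t j + if j = k - 1 then d k else 0) := by
        refine Finset.sum_congr rfl fun j _ => ?_
        by_cases hjk : j = k
        · subst hjk; simp [hkne, h2]; omega
        · by_cases hjk1 : j = k - 1
          · subst hjk1; simp [h1, hz, hjk]
          · simp [hjk, hjk1, h3 j hjk1 hjk]
      rw [Finset.sum_add_distrib, Finset.sum_add_distrib,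
        Finset.sum_ite_eq' (Finset.range (i+1)) k (fun _ => d k),
        Finset.sum_ite_eq' (Finset.range (i+1)) (k-1) (fun _ => d k)] at key
      simp only [Finset.mem_range] at key
      by_cases hik : k < i + 1
      · have hk1 : k - 1 < i + 1 := by omega
        rw [if_pos hik, if_pos hk1] at key
        have heq : ∑ j ∈ Finset.range (i + 1), S (t + 1) j
            = ∑ j ∈ Finset.range (i + 1), S t j := by omega
        rw [heq]; exact IH i
      · by_cases hik2 : k - 1 < i + 1
        · -- i = k - 1
          have hik3 : i = k - 1 := by omega
          rw [if_neg hik, if_pos hik2] at key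
          have heq : ∑ j ∈ Finset.range (i + 1), S (t + 1) j
              = ∑ j ∈ Finset.range (i + 1), S t j + d k := by omega
          rw [heq]
          exact Nat.dvd_add (IH i) (by rw [hik3]; exact hdvd (k-1) k (by omega))
        · rw [if_neg hik, if_neg hik2] at key
          have heq : ∑ j ∈ Finset.range (i + 1), S (t + 1) j
              = ∑ j ∈ Finset.range (i + 1), S t j := by omega
          rw [heq]; exact IH i
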